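/- Let U, E ∈ ℝ^{n×k}, Ũ = U + E, P = ŨᵀŨ − UᵀU, and λ > 0. Let c*_λ = (UᵀU + λI)⁻¹𝟏 / (𝟏ᵀ(UᵀU + λI)⁻¹𝟏) be the solution of the regularized problem for U, and let c̃*_λ = (ŨᵀŨ + λI)⁻¹𝟏 / (𝟏ᵀ(ŨᵀŨ + λI)⁻¹𝟏) be the solution for the perturbed matrix Ũ, assuming ŨᵀŨ + λI is positive definite. Set M_λ = UᵀU + P + λI = ŨᵀŨ + λI and W = I − M_λ⁻¹𝟏𝟏ᵀ/(𝟏ᵀM_λ⁻¹𝟏). Then Δc_λ := c̃*_λ − c*_λ satisfies Δc_λ = −W M_λ⁻¹ P c*_λ = −M_λ⁻¹ Wᵀ P c*_λ, and ‖Δc_λ‖₂ ≤ (‖P‖₂/λ) ‖c*_λ‖₂. -/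

import Mathlib

/-!
Write `N = UᵀU + λI`, so that `M_λ = N + P`. Since `N c* = s⁻¹ 𝟏` with `s = 𝟏ᵀN⁻¹𝟏`, we get
`M_λ⁻¹ P c* = c* - s⁻¹ M_λ⁻¹ 𝟏`; the matrix `W` annihilates `M_λ⁻¹ 𝟏` and acts as
`x ↦ x - (𝟏ᵀx) c̃*`, hence `W M_λ⁻¹ P c* = c* - c̃*`. For symmetric `M_λ` one has
`W M_λ⁻¹ = M_λ⁻¹ Wᵀ`, which gives the second form.

For the bound no projector is needed: `d = c̃* - c*` satisfies `𝟏ᵀd = 0` and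
`M_λ d ∈ ℝ𝟏 - P c*`, so `λ‖d‖² ≤ dᵀM_λ d = -dᵀP c* ≤ ‖d‖ ‖P‖ ‖c*‖`.
-/

open scoped Matrix.Norms.L2Operator
open Matrix

/-- The Euclidean (ℓ₂) norm of a vector in `ℝⁿ`. -/
noncomputable def euclNorm {n : ℕ} (v : Fin n → ℝ) : ℝ := Real.sqrt (∑ i, v i ^ 2)

section EuclNorm

variable {k : ℕ}

lemma euclNorm_eq_norm_toLp (v : Fin k → ℝ) : euclNorm v = ‖WithLp.toLp 2 v‖ := by
  simp [euclNorm, EuclideanSpace.norm_eq]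

lemma euclNorm_nonneg (v : Fin k → ℝ) : 0 ≤ euclNorm v := Real.sqrt_nonneg _

lemma euclNorm_neg (v : Fin k → ℝ) : euclNorm (-v) = euclNorm v := by
  simp [euclNorm]

lemma dotProduct_self_eq_euclNorm_sq (v : Fin k → ℝ) : v ⬝ᵥ v = euclNorm v ^ 2 := by
  rw [euclNorm_eq_norm_toLp, ← real_inner_self_eq_norm_sq, EuclideanSpace.inner_toLp_toLp]
  simp

lemma dotProduct_le_euclNorm_mul (v w : Fin k → ℝ) : v ⬝ᵥ w ≤ euclNorm v * euclNorm w := by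
  rw [euclNorm_eq_norm_toLp, euclNorm_eq_norm_toLp, dotProduct_comm]
  simpa [EuclideanSpace.inner_toLp_toLp] using
    real_inner_le_norm (WithLp.toLp 2 v) (WithLp.toLp 2 w)

lemma euclNorm_mulVec_le {m : ℕ} (A : Matrix (Fin m) (Fin k) ℝ) (v : Fin k → ℝ) :
    euclNorm (A *ᵥ v) ≤ ‖A‖ * euclNorm v := by
  simpa [euclNorm_eq_norm_toLp] using A.l2_opNorm_mulVec (WithLp.toLp 2 v)

end EuclNorm

section RegularizedGram

variable {m ι : Type*} [Fintype m] [Fintype ι] [DecidableEq ι]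

lemma mul_dotProduct_self_le_quadForm_gram_add_smul_one (A : Matrix m ι ℝ) (lam : ℝ)
    (x : ι → ℝ) : lam * (x ⬝ᵥ x) ≤ x ⬝ᵥ (Aᵀ * A + lam • 1) *ᵥ x := by
  have hAx : 0 ≤ (A *ᵥ x) ⬝ᵥ (A *ᵥ x) := by simpa using dotProduct_star_self_nonneg (A *ᵥ x)
  simpa [add_mulVec, ← mulVec_mulVec, dotProduct_add, dotProduct_mulVec, vecMul_transpose,
    smul_mulVec] using hAx

lemma posDef_gram_add_smul_one (A : Matrix m ι ℝ) {lam : ℝ} (hlam : 0 < lam) :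
    (Aᵀ * A + lam • 1).PosDef := by
  simpa using PosDef.posSemidef_add (posSemidef_conjTranspose_mul_self A) (PosDef.one.smul hlam)

end RegularizedGram

section ConstrainedMinimizer

variable {ι : Type*} [Fintype ι] [DecidableEq ι]

/-- For `M` positive definite, the minimizer of `cᵀ M c` subject to `uᵀ c = 1`. -/
noncomputable def constrainedMinimizer (M : Matrix ι ι ℝ) (u : ι → ℝ) : ι → ℝ :=
  (u ⬝ᵥ M⁻¹ *ᵥ u)⁻¹ • M⁻¹ *ᵥ u

noncomputable def constraintProjector (M : Matrix ι ι ℝ) (u : ι → ℝ) : Matrix ι ι ℝ :=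
  1 - (u ⬝ᵥ M⁻¹ *ᵥ u)⁻¹ • (M⁻¹ * vecMulVec u u)

variable {M N : Matrix ι ι ℝ} {u : ι → ℝ}

lemma Matrix.PosDef.dotProduct_inv_mulVec_pos (hM : M.PosDef) (hu : u ≠ 0) :
    0 < u ⬝ᵥ M⁻¹ *ᵥ u := by
  simpa using hM.inv.dotProduct_mulVec_pos hu

lemma dotProduct_constrainedMinimizer (hM : M.PosDef) (hu : u ≠ 0) :
    u ⬝ᵥ constrainedMinimizer M u = 1 := by
  rw [constrainedMinimizer, dotProduct_smul, smul_eq_mul,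
    inv_mul_cancel₀ (hM.dotProduct_inv_mulVec_pos hu).ne']

lemma mulVec_constrainedMinimizer (hM : IsUnit M) :
    M *ᵥ constrainedMinimizer M u = (u ⬝ᵥ M⁻¹ *ᵥ u)⁻¹ • u := by
  rw [constrainedMinimizer, mulVec_smul, mulVec_mulVec,
    mul_nonsing_inv _ ((isUnit_iff_isUnit_det M).mp hM), one_mulVec]

lemma constraintProjector_mulVec (M : Matrix ι ι ℝ) (u x : ι → ℝ) :
    constraintProjector M u *ᵥ x = x - (u ⬝ᵥ x) • constrainedMinimizer M u := by
  rw [constraintProjector, sub_mulVec, one_mulVec, smul_mulVec, ← mulVec_mulVec, vecMulVec_mulVec,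
    op_smul_eq_smul, constrainedMinimizer, mulVec_smul, smul_comm]

lemma constraintProjector_mul_inv (hM : M.IsSymm) (u : ι → ℝ) :
    constraintProjector M u * M⁻¹ = M⁻¹ * (constraintProjector M u)ᵀ := by
  have hMinv : M⁻¹ᵀ = M⁻¹ := by rw [transpose_nonsing_inv, hM.eq]
  rw [constraintProjector, transpose_sub, transpose_one, transpose_smul, transpose_mul,
    transpose_vecMulVec, hMinv, Matrix.sub_mul, Matrix.mul_sub, one_mul, mul_one, Matrix.smul_mul,
    Matrix.mul_smul, mul_assoc]

theorem constrainedMinimizer_sub_eq (hN : N.PosDef) (hM : M.PosDef) (hu : u ≠ 0) :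
    constrainedMinimizer M u - constrainedMinimizer N u =
      -((constraintProjector M u * M⁻¹ * (M - N)) *ᵥ constrainedMinimizer N u) := by
  set c := constrainedMinimizer N u
  have hMc : M⁻¹ *ᵥ ((M - N) *ᵥ c) = c - (u ⬝ᵥ N⁻¹ *ᵥ u)⁻¹ • M⁻¹ *ᵥ u := by
    rw [sub_mulVec, mulVec_constrainedMinimizer hN.isUnit, mulVec_sub, mulVec_mulVec,
      nonsing_inv_mul _ ((isUnit_iff_isUnit_det M).mp hM.isUnit), one_mulVec, mulVec_smul]
  have hWu : constraintProjector M u *ᵥ (M⁻¹ *ᵥ u) = 0 := by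
    rw [constraintProjector_mulVec, constrainedMinimizer, smul_smul,
      mul_inv_cancel₀ (hM.dotProduct_inv_mulVec_pos hu).ne', one_smul, sub_self]
  rw [← mulVec_mulVec, ← mulVec_mulVec, hMc, mulVec_sub, mulVec_smul, hWu, smul_zero, sub_zero,
    constraintProjector_mulVec, dotProduct_constrainedMinimizer hN hu, one_smul, neg_sub]

end ConstrainedMinimizer

lemma mul_euclNorm_le_of_coercive {k : ℕ} {M : Matrix (Fin k) (Fin k) ℝ} {u d y : Fin k → ℝ}
    {a lam : ℝ} (hcoer : ∀ x, lam * (x ⬝ᵥ x) ≤ x ⬝ᵥ M *ᵥ x) (hud : u ⬝ᵥ d = 0)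
    (hMd : M *ᵥ d = a • u + y) : lam * euclNorm d ≤ euclNorm y := by
  have hquad : lam * euclNorm d * euclNorm d ≤ euclNorm y * euclNorm d :=
    calc lam * euclNorm d * euclNorm d = lam * (d ⬝ᵥ d) := by
          rw [dotProduct_self_eq_euclNorm_sq]; ring
      _ ≤ d ⬝ᵥ M *ᵥ d := hcoer d
      _ = d ⬝ᵥ y := by
          rw [hMd, dotProduct_add, dotProduct_smul, dotProduct_comm, hud, smul_zero, zero_add]
      _ ≤ euclNorm y * euclNorm d := by rw [mul_comm]; exact dotProduct_le_euclNorm_mul d y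
  rcases (euclNorm_nonneg d).eq_or_lt with hd | hd
  · rw [← hd, mul_zero]
    exact euclNorm_nonneg y
  · exact le_of_mul_le_mul_right hquad hd

theorem mul_euclNorm_constrainedMinimizer_sub_le {k : ℕ} {M N : Matrix (Fin k) (Fin k) ℝ}
    {u : Fin k → ℝ} {lam : ℝ} (hN : N.PosDef) (hM : M.PosDef) (hu : u ≠ 0)
    (hcoer : ∀ x, lam * (x ⬝ᵥ x) ≤ x ⬝ᵥ M *ᵥ x) :
    lam * euclNorm (constrainedMinimizer M u - constrainedMinimizer N u) ≤
      euclNorm ((M - N) *ᵥ constrainedMinimizer N u) := by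
  rw [← euclNorm_neg ((M - N) *ᵥ _)]
  refine mul_euclNorm_le_of_coercive (u := u) (a := (u ⬝ᵥ M⁻¹ *ᵥ u)⁻¹ - (u ⬝ᵥ N⁻¹ *ᵥ u)⁻¹)
    hcoer ?_ ?_
  · rw [dotProduct_sub, dotProduct_constrainedMinimizer hM hu,
      dotProduct_constrainedMinimizer hN hu, sub_self]
  · rw [mulVec_sub, mulVec_constrainedMinimizer hM.isUnit, sub_mulVec,
      mulVec_constrainedMinimizer hN.isUnit, sub_smul]
    abel

theorem rmpe_perturbation_general {n k : ℕ} (U Ut : Matrix (Fin n) (Fin k) ℝ)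
    (P : Matrix (Fin k) (Fin k) ℝ) (hP : P = Utᵀ * Ut - Uᵀ * U)
    (lam : ℝ) (hlam : 0 < lam)
    (Mlam : Matrix (Fin k) (Fin k) ℝ)
    (hMlam : Mlam = Utᵀ * Ut + lam • (1 : Matrix (Fin k) (Fin k) ℝ))
    (cstar ct : Fin k → ℝ)
    (hcstar : cstar =
      ((fun _ => (1 : ℝ)) ⬝ᵥ (Uᵀ * U + lam • (1 : Matrix (Fin k) (Fin k) ℝ))⁻¹ *ᵥ
          (fun _ => (1 : ℝ)))⁻¹ •
        (Uᵀ * U + lam • (1 : Matrix (Fin k) (Fin k) ℝ))⁻¹ *ᵥ (fun _ => (1 : ℝ)))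
    (hct : ct = ((fun _ => (1 : ℝ)) ⬝ᵥ Mlam⁻¹ *ᵥ (fun _ => (1 : ℝ)))⁻¹ •
      Mlam⁻¹ *ᵥ (fun _ => (1 : ℝ)))
    (W : Matrix (Fin k) (Fin k) ℝ)
    (hW : W = 1 - ((fun _ => (1 : ℝ)) ⬝ᵥ Mlam⁻¹ *ᵥ (fun _ => (1 : ℝ)))⁻¹ •
      (Mlam⁻¹ * Matrix.of (fun _ _ => (1 : ℝ)))) :
    ct - cstar = -((W * Mlam⁻¹ * P) *ᵥ cstar) ∧
    ct - cstar = -((Mlam⁻¹ * Wᵀ * P) *ᵥ cstar) ∧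
    euclNorm (ct - cstar) ≤ (‖P‖ / lam) * euclNorm cstar := by
  obtain rfl | hk := k.eq_zero_or_pos
  · exact ⟨Subsingleton.elim _ _, Subsingleton.elim _ _, by simp [euclNorm]⟩
  have hu : (fun _ => (1 : ℝ)) ≠ (0 : Fin k → ℝ) := fun h => one_ne_zero (congrFun h ⟨0, hk⟩)
  have hN := posDef_gram_add_smul_one U hlam
  have hM : Mlam.PosDef := hMlam ▸ posDef_gram_add_smul_one Ut hlam
  have hPMN : P = Mlam - (Uᵀ * U + lam • 1) := by rw [hP, hMlam]; abel
  have hWproj : W = constraintProjector Mlam fun _ => 1 := by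
    rw [hW, constraintProjector]; congr; ext; simp
  change cstar = constrainedMinimizer _ _ at hcstar
  change ct = constrainedMinimizer _ _ at hct
  subst hcstar hct hWproj hPMN
  have hdiff := constrainedMinimizer_sub_eq hN hM hu
  refine ⟨hdiff, by rw [hdiff, constraintProjector_mul_inv (isHermitian_iff_isSymm.mp hM.1)], ?_⟩
  have hbound := mul_euclNorm_constrainedMinimizer_sub_le hN hM hu
    (hMlam ▸ mul_dotProduct_self_le_quadForm_gram_add_smul_one Ut lam)
  rw [div_mul_eq_mul_div, le_div_iff₀ hlam, mul_comm]
  exact hbound.trans (euclNorm_mulVec_le _ _)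

/-- Perturbation of the regularized AMPE solution:
`Δc_λ = −W M_λ⁻¹ P c*_λ = −M_λ⁻¹ Wᵀ P c*_λ` and `‖Δc_λ‖₂ ≤ (‖P‖₂/λ)‖c*_λ‖₂`. -/
theorem rmpe_perturbation {n k : ℕ} (U E Ut : Matrix (Fin n) (Fin k) ℝ)
    (hUt : Ut = U + E)
    (P : Matrix (Fin k) (Fin k) ℝ) (hP : P = Utᵀ * Ut - Uᵀ * U)
    (lam : ℝ) (hlam : 0 < lam)
    (Mlam : Matrix (Fin k) (Fin k) ℝ)
    (hMlam : Mlam = Utᵀ * Ut + lam • (1 : Matrix (Fin k) (Fin k) ℝ))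
    (hpd : Mlam.PosDef)
    (cstar ct : Fin k → ℝ)
    (hcstar : cstar =
      ((fun _ => (1 : ℝ)) ⬝ᵥ (Uᵀ * U + lam • (1 : Matrix (Fin k) (Fin k) ℝ))⁻¹ *ᵥ
          (fun _ => (1 : ℝ)))⁻¹ •
        (Uᵀ * U + lam • (1 : Matrix (Fin k) (Fin k) ℝ))⁻¹ *ᵥ (fun _ => (1 : ℝ)))
    (hct : ct = ((fun _ => (1 : ℝ)) ⬝ᵥ Mlam⁻¹ *ᵥ (fun _ => (1 : ℝ)))⁻¹ •
      Mlam⁻¹ *ᵥ (fun _ => (1 : ℝ)))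
    (W : Matrix (Fin k) (Fin k) ℝ)
    (hW : W = 1 - ((fun _ => (1 : ℝ)) ⬝ᵥ Mlam⁻¹ *ᵥ (fun _ => (1 : ℝ)))⁻¹ •
      (Mlam⁻¹ * Matrix.of (fun _ _ => (1 : ℝ)))) :
    ct - cstar = -((W * Mlam⁻¹ * P) *ᵥ cstar) ∧
    ct - cstar = -((Mlam⁻¹ * Wᵀ * P) *ᵥ cstar) ∧
    euclNorm (ct - cstar) ≤ (‖P‖ / lam) * euclNorm cstar :=
  rmpe_perturbation_general U Ut P hP lam hlam Mlam hMlam cstar ct hcstar hct W hW
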